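/- arXiv:math/0409136 — 2 statements merged into one kernel-verified Lean document; each statement's English description precedes it below -/
import Mathlib

section
/- Let n ≥ 2, let U ⊆ ℝⁿ be an open set, let p ∈ U, let F be a finite-dimensional real normed vector space, and let ω : U → (ℝⁿ →L[ℝ] (F →L[ℝ] F)) be a continuous map (a continuous connection form in a local trivialization). Suppose σ : U → F is continuously differentiable on U \ {p} and parallel there, i.e. for every x ∈ U \ {p} and every v ∈ ℝⁿ its Fréchet derivative satisfies Dσ(x)(v) = −(ω(x)(v))(σ(x)). Then there exists a unique map σ̃ : U → F that is continuously differentiable on all of U, agrees with σ on U \ {p}, and satisfies Dσ̃(x)(v) = −(ω(x)(v))(σ̃(x)) for all x ∈ U and v ∈ ℝⁿ. -/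
/-!
Bounding `‖ω‖` by `M` on a closed ball around `p`, a parallel section satisfies
`‖Dσ‖ ≤ M ‖σ‖` there, so Gronwall's inequality along the radii, started on the sphere where `σ` is
bounded by compactness, bounds `σ` and hence `Dσ` on the punctured ball. In dimension at least two
any two points of a punctured ball are joined by segments avoiding the centre, up to an arbitrarily
small perturbation, so the mean value inequality makes `σ` Lipschitz there and `σ` has a limit at
`p`. The extension by this limit is differentiable at `p` with derivative `-ω(p)(·)σ(p)`, by the
same Lipschitz estimate applied to `σ` minus this linear map; uniqueness is continuity.
-/

open Metric Set Filter Module Function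
open scoped Topology

/-- A section `σ` is *parallel* on a set `s` for the connection form `ω` if its Fréchet
derivative in every direction `v` equals `-(ω x v) (σ x)` at every point of `s`. -/
def IsParallelOn {n : ℕ} {F : Type*} [NormedAddCommGroup F] [NormedSpace ℝ F]
    (ω : EuclideanSpace ℝ (Fin n) →
      (EuclideanSpace ℝ (Fin n) →L[ℝ] (F →L[ℝ] F)))
    (σ : EuclideanSpace ℝ (Fin n) → F) (s : Set (EuclideanSpace ℝ (Fin n))) : Prop :=
  ∀ x ∈ s, ∀ v : EuclideanSpace ℝ (Fin n), fderiv ℝ σ x v = -((ω x) v) (σ x)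

section

variable {E F : Type*} [NormedAddCommGroup E] [NormedSpace ℝ E]
  [NormedAddCommGroup F] [NormedSpace ℝ F]

theorem exists_notMem_span_singleton (hE : 2 ≤ finrank ℝ E) (v : E) :
    ∃ w, w ∉ ℝ ∙ v := by
  by_contra! h
  have htop : ℝ ∙ v = ⊤ := Submodule.eq_top_iff'.mpr h
  have := finrank_span_le_card (R := ℝ) ({v} : Set E)
  rw [htop, finrank_top] at this
  rw [Set.toFinset_singleton, Finset.card_singleton] at this
  omega

theorem notMem_segment_add_smul {x y p w : E} (hpx : p ≠ x) (hp : p ∈ segment ℝ x y)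
    (hw : w ∉ ℝ ∙ (y - x)) {t : ℝ} (ht : t ≠ 0) : p ∉ segment ℝ x (y + t • w) := by
  rw [segment_eq_image'] at hp ⊢
  rintro ⟨c, -, rfl⟩
  obtain ⟨b, -, hb⟩ := hp
  have hc : c ≠ 0 := by rintro rfl; simp at hpx
  refine hw (Submodule.mem_span_singleton.mpr ⟨(c * t)⁻¹ * (b - c), ?_⟩)
  have hbc : (b - c) • (y - x) = (c * t) • w := by
    simp only at hb
    linear_combination (norm := module) hb
  rw [mul_smul, hbc, smul_smul, inv_mul_cancel₀ (mul_ne_zero hc ht), one_smul]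

theorem Convex.norm_image_sub_le_of_norm_fderiv_le_diff_singleton (hE : 2 ≤ finrank ℝ E)
    {s : Set E} (hs : Convex ℝ s) (hs' : IsOpen s) {f : E → F} {φ : E →L[ℝ] F} {p : E} {C : ℝ}
    (hf : ∀ z ∈ s \ {p}, DifferentiableAt ℝ f z) (bound : ∀ z ∈ s \ {p}, ‖fderiv ℝ f z - φ‖ ≤ C)
    {x y : E} (hx : x ∈ s \ {p}) (hy : y ∈ s \ {p}) :
    ‖f y - f x - φ (y - x)‖ ≤ C * ‖y - x‖ := by
  have off_segment : ∀ y' ∈ s, p ∉ segment ℝ x y' →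
      ‖f y' - f x - φ (y' - x)‖ ≤ C * ‖y' - x‖ := by
    intro y' hy' hp
    have hsub : segment ℝ x y' ⊆ s \ {p} := fun z hz =>
      ⟨hs.segment_subset hx.1 hy' hz, fun hzp => hp (eq_of_mem_singleton hzp ▸ hz)⟩
    exact (convex_segment x y').norm_image_sub_le_of_norm_fderiv_le' (fun z hz => hf z (hsub hz))
      (fun z hz => bound z (hsub hz)) (left_mem_segment ℝ x y') (right_mem_segment ℝ x y')
  by_cases hp : p ∉ segment ℝ x y
  · exact off_segment y hy.1 hp
  rw [not_not] at hp
  -- Since `dim E ≥ 2`, moving `y` off the line through `x` and `p` makes the segment miss `p`.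
  obtain ⟨w, hw⟩ := exists_notMem_span_singleton hE (y - x)
  have hline : Tendsto (fun t : ℝ => y + t • w) (𝓝[≠] 0) (𝓝 y) := by
    have : Continuous fun t : ℝ => y + t • w := by fun_prop
    simpa using (this.tendsto 0).mono_left nhdsWithin_le_nhds
  have hlhs := ((((hf y hy).continuousAt.tendsto.comp hline).sub_const (f x)).sub
    ((φ.continuous.tendsto _).comp (hline.sub_const x))).norm
  refine le_of_tendsto_of_tendsto hlhs ((hline.sub_const x).norm.const_mul C) ?_
  filter_upwards [hline (hs'.mem_nhds hy.1), self_mem_nhdsWithin] with t hts ht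
  exact off_segment _ hts (notMem_segment_add_smul (Ne.symm hx.2) hp hw ht)

theorem exists_tendsto_nhdsWithin_of_dist_le_mul {X Y : Type*} [PseudoMetricSpace X]
    [PseudoMetricSpace Y] [CompleteSpace Y] {f : X → Y} {s : Set X} {p : X} [(𝓝[s] p).NeBot]
    {C : ℝ} (hf : ∀ x ∈ s, ∀ y ∈ s, dist (f x) (f y) ≤ C * dist x y) :
    ∃ L, Tendsto f (𝓝[s] p) (𝓝 L) := by
  refine cauchy_map_iff_exists_tendsto.mp (cauchy_map_iff'.mpr ?_)
  rw [tendsto_uniformity_iff_dist_tendsto_zero]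
  have hdist : Tendsto (fun q : X × X => C * dist q.1 q.2) (𝓝[s] p ×ˢ 𝓝[s] p) (𝓝 0) := by
    have hle : 𝓝[s] p ×ˢ 𝓝[s] p ≤ 𝓝 (p, p) := by
      rw [nhds_prod_eq]
      exact prod_mono nhdsWithin_le_nhds nhdsWithin_le_nhds
    simpa using ((continuous_dist.tendsto (p, p)).mono_left hle).const_mul C
  refine squeeze_zero' (Eventually.of_forall fun q => dist_nonneg) ?_ hdist
  filter_upwards [prod_mem_prod self_mem_nhdsWithin self_mem_nhdsWithin] with q hq
  exact hf _ hq.1 _ hq.2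

theorem exists_tendsto_nhdsNE_of_norm_fderiv_le [CompleteSpace F] (hE : 2 ≤ finrank ℝ E)
    {f : E → F} {p : E} {r C : ℝ} (hr : 0 < r)
    (hf : ∀ z ∈ ball p r \ {p}, DifferentiableAt ℝ f z)
    (bound : ∀ z ∈ ball p r \ {p}, ‖fderiv ℝ f z‖ ≤ C) :
    ∃ L, Tendsto f (𝓝[≠] p) (𝓝 L) := by
  have : Nontrivial E := Module.nontrivial_of_finrank_pos (R := ℝ) (by omega)
  have hnhds : 𝓝[ball p r \ {p}] p = 𝓝[≠] p := by
    rw [sdiff_eq, nhdsWithin_inter_of_mem (mem_nhdsWithin_of_mem_nhds (ball_mem_nhds p hr))]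
  have : (𝓝[ball p r \ {p}] p).NeBot := hnhds ▸ inferInstance
  rw [← hnhds]
  refine exists_tendsto_nhdsWithin_of_dist_le_mul (C := C) fun x hx y hy => ?_
  simpa [dist_eq_norm] using (convex_ball p r).norm_image_sub_le_of_norm_fderiv_le_diff_singleton
    hE isOpen_ball (φ := 0) hf (by simpa using bound) hy hx

theorem hasFDerivAt_of_tendsto_fderiv_nhdsNE (hE : 2 ≤ finrank ℝ E) {f : E → F}
    {f' : E →L[ℝ] F} {p : E} (hcont : ContinuousAt f p)
    (hdiff : ∀ᶠ z in 𝓝[≠] p, DifferentiableAt ℝ f z)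
    (hlim : Tendsto (fderiv ℝ f) (𝓝[≠] p) (𝓝 f')) : HasFDerivAt f f' p := by
  have : Nontrivial E := Module.nontrivial_of_finrank_pos (R := ℝ) (by omega)
  rw [hasFDerivAt_iff_isLittleO, Asymptotics.isLittleO_iff]
  intro c hc
  have hnear : ∀ᶠ z in 𝓝[≠] p, DifferentiableAt ℝ f z ∧ ‖fderiv ℝ f z - f'‖ ≤ c :=
    hdiff.and <| (hlim.eventually_mem (closedBall_mem_nhds f' hc)).mono fun z hz => by
      rwa [mem_closedBall, dist_eq_norm] at hz
  obtain ⟨δ, hδ, hball⟩ := Metric.eventually_nhds_iff_ball.mp (eventually_nhdsWithin_iff.mp hnear)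
  filter_upwards [ball_mem_nhds p hδ] with w hw
  rcases eq_or_ne w p with rfl | hwp
  · simp
  have hw' : w ∈ ball p δ \ {p} := ⟨hw, hwp⟩
  have hlhs : ContinuousAt (fun y => ‖f w - f y - f' (w - y)‖) p := by fun_prop
  have hrhs : ContinuousAt (fun y => c * ‖w - y‖) p := by fun_prop
  refine le_of_tendsto_of_tendsto (hlhs.tendsto.mono_left (nhdsWithin_le_nhds (s := {p}ᶜ)))
    (hrhs.tendsto.mono_left nhdsWithin_le_nhds) ?_
  filter_upwards [sdiff_mem_nhdsWithin_compl (ball_mem_nhds p hδ) {p}] with y hy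
  exact (convex_ball p δ).norm_image_sub_le_of_norm_fderiv_le_diff_singleton hE isOpen_ball
    (fun z hz => (hball z hz.1 hz.2).1) (fun z hz => (hball z hz.1 hz.2).2) hy hw'

theorem norm_image_le_mul_exp_of_norm_fderiv_le_mul_norm {f : E → F} {a b : E} {M : ℝ}
    (hf : ∀ z ∈ segment ℝ a b, DifferentiableAt ℝ f z)
    (bound : ∀ z ∈ segment ℝ a b, ‖fderiv ℝ f z‖ ≤ M * ‖f z‖) :
    ‖f b‖ ≤ ‖f a‖ * Real.exp (M * ‖b - a‖) := by
  set γ : ℝ → E := fun t => a + t • (b - a)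
  have hγ : ∀ t ∈ Icc (0 : ℝ) 1, γ t ∈ segment ℝ a b := fun t ht =>
    segment_eq_image' ℝ a b ▸ mem_image_of_mem γ ht
  have hderiv : ∀ t ∈ Icc (0 : ℝ) 1, HasDerivAt (f ∘ γ) (fderiv ℝ f (γ t) (b - a)) t :=
    fun t ht => (hf _ (hγ t ht)).hasFDerivAt.comp_hasDerivAt t
      (by simpa only [one_smul] using ((hasDerivAt_id' t).smul_const (b - a)).const_add a)
  have hbound : ∀ t ∈ Ico (0 : ℝ) 1,
      ‖fderiv ℝ f (γ t) (b - a)‖ ≤ M * ‖b - a‖ * ‖(f ∘ γ) t‖ + 0 := fun t ht =>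
    calc ‖fderiv ℝ f (γ t) (b - a)‖ ≤ ‖fderiv ℝ f (γ t)‖ * ‖b - a‖ := by
          exact (fderiv ℝ f (γ t)).le_opNorm _
      _ ≤ M * ‖f (γ t)‖ * ‖b - a‖ :=
          mul_le_mul_of_nonneg_right (bound _ (hγ t (Ico_subset_Icc_self ht))) (norm_nonneg _)
      _ = M * ‖b - a‖ * ‖(f ∘ γ) t‖ + 0 := by simp only [Function.comp_apply]; ring
  have := norm_le_gronwallBound_of_norm_deriv_right_le
    (fun t ht => (hderiv t ht).continuousAt.continuousWithinAt)
    (fun t ht => (hderiv t (Ico_subset_Icc_self ht)).hasDerivWithinAt) (δ := ‖f a‖)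
    (by simp [γ]) hbound 1 (right_mem_Icc.2 zero_le_one)
  simpa [γ, gronwallBound_ε0] using this

theorem center_notMem_segment_of_one_le {p z : E} (hz : z ≠ p) {c : ℝ} (hc : 1 ≤ c) :
    p ∉ segment ℝ z (p + c • (z - p)) := by
  rw [segment_eq_image']
  rintro ⟨θ, hθ, h⟩
  have hzero : (1 + θ * (c - 1)) • (z - p) = 0 := by
    simp only at h
    linear_combination (norm := module) h
  rcases smul_eq_zero.mp hzero with hcoef | hzp
  · nlinarith [hθ.1]
  · exact hz (sub_eq_zero.mp hzp)

theorem norm_le_of_sphere_of_norm_fderiv_le_mul_norm {f : E → F} {p : E} {r M K : ℝ}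
    (hf : ∀ z ∈ closedBall p r \ {p}, DifferentiableAt ℝ f z)
    (bound : ∀ z ∈ closedBall p r \ {p}, ‖fderiv ℝ f z‖ ≤ M * ‖f z‖)
    (hK : ∀ z ∈ sphere p r, ‖f z‖ ≤ K) {z : E} (hz : z ∈ closedBall p r \ {p}) :
    ‖f z‖ ≤ K * Real.exp (|M| * (2 * r)) := by
  have hzp : 0 < ‖z - p‖ := norm_pos_iff.2 (sub_ne_zero.2 hz.2)
  have hzr : ‖z - p‖ ≤ r := by rw [← dist_eq_norm]; exact hz.1
  set a := p + (r / ‖z - p‖) • (z - p)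
  have ha : a ∈ sphere p r := by
    rw [mem_sphere, dist_eq_norm, add_sub_cancel_left, norm_smul,
      Real.norm_of_nonneg (div_pos (hzp.trans_le hzr) hzp).le,
      div_mul_cancel₀ _ hzp.ne']
  have hseg : segment ℝ a z ⊆ closedBall p r \ {p} := fun w hw =>
    ⟨(convex_closedBall p r).segment_subset (sphere_subset_closedBall ha) hz.1 hw, fun hwp =>
      center_notMem_segment_of_one_le hz.2 ((one_le_div hzp).2 hzr)
        (segment_symm ℝ a z ▸ eq_of_mem_singleton hwp ▸ hw)⟩
  have hza : ‖z - a‖ ≤ 2 * r := by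
    rw [← dist_eq_norm, two_mul]
    exact (dist_triangle_right z a p).trans (add_le_add hz.1 (le_of_eq ha))
  calc ‖f z‖ ≤ ‖f a‖ * Real.exp (M * ‖z - a‖) :=
        norm_image_le_mul_exp_of_norm_fderiv_le_mul_norm (fun w hw => hf w (hseg hw))
          (fun w hw => bound w (hseg hw))
    _ ≤ K * Real.exp (|M| * (2 * r)) := by
        refine mul_le_mul (hK a ha) (Real.exp_le_exp.2 ?_) (Real.exp_pos _).le
          ((norm_nonneg _).trans (hK a ha))
        exact (mul_le_mul_of_nonneg_right (le_abs_self M) (norm_nonneg _)).trans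
          (mul_le_mul_of_nonneg_left hza (abs_nonneg M))

theorem contDiffOn_one_of_hasFDerivAt {f : E → F} {f' : E → E →L[ℝ] F} {s : Set E}
    (hs : IsOpen s) (hf : ∀ x ∈ s, HasFDerivAt f (f' x) x) (hf' : ContinuousOn f' s) :
    ContDiffOn ℝ 1 f s := by
  rw [show (1 : WithTop ℕ∞) = 0 + 1 from rfl, contDiffOn_succ_iff_fderiv_of_isOpen hs]
  exact ⟨fun x hx => (hf x hx).differentiableAt.differentiableWithinAt, by simp,
    contDiffOn_zero.2 (hf'.congr fun x hx => (hf x hx).fderiv)⟩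

end

theorem Set.EqOn.of_diff_singleton {X Y : Type*} [TopologicalSpace X] [TopologicalSpace Y]
    [T2Space Y] {f g : X → Y} {U : Set X} {p : X} [(𝓝[≠] p).NeBot] (h : EqOn f g (U \ {p}))
    (hU : IsOpen U) (hf : ContinuousOn f U) (hg : ContinuousOn g U) : EqOn f g U :=
  h.of_subset_closure hf hg sdiff_subset fun x hx =>
    sdiff_eq U {p} ▸ hU.inter_closure ⟨hx, by rw [closure_compl_singleton]; trivial⟩

theorem continuousOn_neg_flip_apply {X E F G : Type*} [TopologicalSpace X]
    [NormedAddCommGroup E] [NormedSpace ℝ E] [NormedAddCommGroup F] [NormedSpace ℝ F]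
    [NormedAddCommGroup G] [NormedSpace ℝ G] {ω : X → E →L[ℝ] F →L[ℝ] G} {σ : X → F} {U : Set X}
    (hω : ContinuousOn ω U) (hσ : ContinuousOn σ U) :
    ContinuousOn (fun x => -(ω x).flip (σ x)) U :=
  (((ContinuousLinearMap.flipₗᵢ ℝ E F G).continuous.comp_continuousOn hω).clm_apply hσ).neg

section

variable {n : ℕ} {F : Type*} [NormedAddCommGroup F] [NormedSpace ℝ F]
  {ω : EuclideanSpace ℝ (Fin n) → (EuclideanSpace ℝ (Fin n) →L[ℝ] (F →L[ℝ] F))}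
  {σ : EuclideanSpace ℝ (Fin n) → F} {s : Set (EuclideanSpace ℝ (Fin n))}

theorem IsParallelOn.fderiv_eq (h : IsParallelOn ω σ s) {x : EuclideanSpace ℝ (Fin n)}
    (hx : x ∈ s) : fderiv ℝ σ x = -(ω x).flip (σ x) := by
  ext v
  simp [h x hx v]

theorem IsParallelOn.norm_fderiv_le (h : IsParallelOn ω σ s) {x : EuclideanSpace ℝ (Fin n)}
    (hx : x ∈ s) : ‖fderiv ℝ σ x‖ ≤ ‖ω x‖ * ‖σ x‖ := by
  rw [h.fderiv_eq hx, norm_neg, ← (ω x).opNorm_flip]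
  exact (ω x).flip.le_opNorm _

theorem isParallelOn_of_hasFDerivAt (h : ∀ x ∈ s, HasFDerivAt σ (-(ω x).flip (σ x)) x) :
    IsParallelOn ω σ s := fun x hx v => by
  simp [(h x hx).fderiv]

theorem IsParallelOn.exists_tendsto_nhdsNE [CompleteSpace F] (hn : 2 ≤ n)
    {U : Set (EuclideanSpace ℝ (Fin n))} (hU : IsOpen U) {p : EuclideanSpace ℝ (Fin n)}
    (hp : p ∈ U) (hω : ContinuousOn ω U) (hσ : ∀ z ∈ U \ {p}, DifferentiableAt ℝ σ z)
    (hpar : IsParallelOn ω σ (U \ {p})) : ∃ L, Tendsto σ (𝓝[≠] p) (𝓝 L) := by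
  obtain ⟨r, hr, hrU⟩ := nhds_basis_closedBall.mem_iff.1 (hU.mem_nhds hp)
  have hsub : closedBall p r \ {p} ⊆ U \ {p} := sdiff_subset_sdiff_left hrU
  have hsphere : sphere p r ⊆ closedBall p r \ {p} := fun z hz =>
    ⟨sphere_subset_closedBall hz, fun hzp => by
      rw [eq_of_mem_singleton hzp, mem_sphere, dist_self] at hz; exact hr.ne hz⟩
  obtain ⟨M, hM⟩ := (isCompact_closedBall p r).exists_bound_of_continuousOn (f := ω) (hω.mono hrU)
  obtain ⟨K, hK⟩ := (isCompact_sphere p r).exists_bound_of_continuousOn (f := σ)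
    fun z hz => (hσ z (hsub (hsphere hz))).continuousAt.continuousWithinAt
  obtain ⟨B, hB⟩ : ∃ B, ∀ z ∈ closedBall p r \ {p}, ‖σ z‖ ≤ B := ⟨_, fun z hz =>
    norm_le_of_sphere_of_norm_fderiv_le_mul_norm (fun w hw => hσ w (hsub hw))
      (fun w hw => (hpar.norm_fderiv_le (hsub hw)).trans
        (mul_le_mul_of_nonneg_right (hM w hw.1) (norm_nonneg _))) hK hz⟩
  refine exists_tendsto_nhdsNE_of_norm_fderiv_le (C := M * B)
    (by rwa [finrank_euclideanSpace_fin]) hr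
    (fun z hz => hσ z (hsub ⟨ball_subset_closedBall hz.1, hz.2⟩)) fun z hz => ?_
  have hz' : z ∈ closedBall p r \ {p} := ⟨ball_subset_closedBall hz.1, hz.2⟩
  exact (hpar.norm_fderiv_le (hsub hz')).trans
    (mul_le_mul (hM z hz'.1) (hB z hz') (norm_nonneg _) ((norm_nonneg _).trans (hM z hz'.1)))

theorem IsParallelOn.hasFDerivAt_update [CompleteSpace F] (hn : 2 ≤ n)
    {U : Set (EuclideanSpace ℝ (Fin n))} (hU : IsOpen U) {p : EuclideanSpace ℝ (Fin n)}
    (hω : ContinuousOn ω U) (hσ : ∀ z ∈ U \ {p}, DifferentiableAt ℝ σ z)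
    (hpar : IsParallelOn ω σ (U \ {p})) {L : F} (hL : Tendsto σ (𝓝[≠] p) (𝓝 L)) :
    ∀ x ∈ U, HasFDerivAt (update σ p L) (-(ω x).flip (update σ p L x)) x := by
  have hderiv_off : ∀ z ∈ U \ {p},
      HasFDerivAt (update σ p L) (-(ω z).flip (update σ p L z)) z := fun z hz => by
    have hloc : update σ p L =ᶠ[𝓝 z] σ :=
      (eventually_ne_nhds hz.2).mono fun w hw => update_of_ne hw _ _
    rw [update_of_ne hz.2, ← hpar.fderiv_eq hz]
    exact (hσ z hz).hasFDerivAt.congr_of_eventuallyEq hloc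
  have hcont : ContinuousOn (update σ p L) U := fun x hx => by
    rcases eq_or_ne x p with rfl | hxp
    · exact (continuousAt_update_same.2 hL).continuousWithinAt
    · exact (hderiv_off x ⟨hx, hxp⟩).continuousAt.continuousWithinAt
  intro x hx
  rcases eq_or_ne x p with rfl | hxp
  · have hnear : U \ {x} ∈ 𝓝[≠] x := sdiff_mem_nhdsWithin_compl (hU.mem_nhds hx) {x}
    have hlim := ((continuousOn_neg_flip_apply hω hcont).continuousAt (hU.mem_nhds hx)).tendsto
    refine hasFDerivAt_of_tendsto_fderiv_nhdsNE (by rwa [finrank_euclideanSpace_fin])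
      (continuousAt_update_same.2 hL)
      (mem_of_superset hnear fun z hz => (hderiv_off z hz).differentiableAt)
      ((hlim.mono_left nhdsWithin_le_nhds).congr' ?_)
    exact mem_of_superset hnear fun z hz => (hderiv_off z hz).fderiv.symm
  · exact hderiv_off x ⟨hx, hxp⟩

end

/-- **Lemma 5**: a section which is `C¹` and parallel on `U \ {p}` for a continuous
connection form extends uniquely to a `C¹` parallel section on all of `U`. -/
theorem parallel_section_extension
    (n : ℕ) (hn : 2 ≤ n)
    (U : Set (EuclideanSpace ℝ (Fin n))) (hU : IsOpen U)
    (p : EuclideanSpace ℝ (Fin n)) (hp : p ∈ U)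
    (F : Type*) [NormedAddCommGroup F] [NormedSpace ℝ F] [FiniteDimensional ℝ F]
    (ω : EuclideanSpace ℝ (Fin n) →
      (EuclideanSpace ℝ (Fin n) →L[ℝ] (F →L[ℝ] F)))
    (hω : ContinuousOn ω U)
    (σ : EuclideanSpace ℝ (Fin n) → F)
    (hσ : ContDiffOn ℝ 1 σ (U \ {p}))
    (hσpar : IsParallelOn ω σ (U \ {p})) :
    ∃ σt : EuclideanSpace ℝ (Fin n) → F,
      (ContDiffOn ℝ 1 σt U ∧ Set.EqOn σt σ (U \ {p}) ∧ IsParallelOn ω σt U) ∧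
      ∀ σt' : EuclideanSpace ℝ (Fin n) → F,
        (ContDiffOn ℝ 1 σt' U ∧ Set.EqOn σt' σ (U \ {p}) ∧ IsParallelOn ω σt' U) →
        Set.EqOn σt' σt U := by
  have : Nontrivial (EuclideanSpace ℝ (Fin n)) :=
    Module.nontrivial_of_finrank_pos (R := ℝ) (by rw [finrank_euclideanSpace_fin]; omega)
  have hσd : ∀ z ∈ U \ {p}, DifferentiableAt ℝ σ z := fun z hz =>
    (hσ.differentiableOn one_ne_zero).differentiableAt ((hU.sdiff isClosed_singleton).mem_nhds hz)
  obtain ⟨L, hL⟩ := hσpar.exists_tendsto_nhdsNE hn hU hp hω hσd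
  have heq : EqOn (update σ p L) σ (U \ {p}) := fun z hz => update_of_ne hz.2 _ _
  have hderiv := hσpar.hasFDerivAt_update hn hU hω hσd hL
  have hcont : ContinuousOn (update σ p L) U := fun x hx =>
    (hderiv x hx).continuousAt.continuousWithinAt
  refine ⟨update σ p L, ⟨contDiffOn_one_of_hasFDerivAt hU hderiv
    (continuousOn_neg_flip_apply hω hcont), heq, isParallelOn_of_hasFDerivAt hderiv⟩, ?_⟩
  rintro τ ⟨hτ, hτσ, -⟩
  exact (hτσ.trans heq.symm).of_diff_singleton hU hτ.continuousOn hcont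
end

section
/- Let n ≥ 1, R > 0, C ≥ 0, and let τ, μ be natural numbers with μ ≥ τ − 1 ≥ 2. Let h be a C^μ map from the open set {y ∈ ℝⁿ : ‖y‖ > R} to n×n real matrices whose iterated derivatives satisfy ‖D^k h(y)‖ ≤ C‖y‖^{−τ−k} for all 0 ≤ k ≤ μ and all ‖y‖ > R. Let B(z) denote the n×n matrix ‖z‖^{−2}(I − 2‖z‖^{−2}·z zᵀ), which is the matrix of the differential at z of the inversion map ι(z) = z/‖z‖², and for 0 < ‖z‖ < 1/R define ḡ(z) := ‖z‖⁴ · B(z)ᵀ (I + h(z/‖z‖²)) B(z). Then there exists a map G from the open ball {z : ‖z‖ < 1/R} to n×n real matrices that is (τ−1)-times continuously differentiable on that ball, agrees with ḡ on the punctured ball 0 < ‖z‖ < 1/R, and satisfies G(0) = I. -/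
open Matrix

attribute [local instance] Matrix.normedAddCommGroup Matrix.normedSpace

/-- The Euclidean norm of a vector in `ℝⁿ`. -/
noncomputable def euclNorm {n : ℕ} (y : Fin n → ℝ) : ℝ :=
  Real.sqrt (∑ i, y i ^ 2)

/-- The matrix `B(z) = ‖z‖⁻²(I − 2‖z‖⁻² z zᵀ)` of the differential at `z` of the inversion
map `ι(z) = z/‖z‖²`; here `∑ i, z i ^ 2 = ‖z‖²`. -/
noncomputable def inversionDiff {n : ℕ} (z : Fin n → ℝ) : Matrix (Fin n) (Fin n) ℝ :=
  (∑ i, z i ^ 2)⁻¹ • ((1 : Matrix (Fin n) (Fin n) ℝ)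
    - (2 * (∑ i, z i ^ 2)⁻¹) • Matrix.vecMulVec z z)

/-- The coefficient matrix `ḡ(z) = ‖z‖⁴ · B(z)ᵀ (I + h(z/‖z‖²)) B(z)` of the conformally
rescaled metric `ρ⁻⁴ g` in the inverted coordinates `z = y/‖y‖²`. -/
noncomputable def invertedMetric {n : ℕ}
    (h : (Fin n → ℝ) → Matrix (Fin n) (Fin n) ℝ) (z : Fin n → ℝ) :
    Matrix (Fin n) (Fin n) ℝ :=
  ((∑ i, z i ^ 2) ^ 2) •
    ((inversionDiff z)ᵀ * (1 + h ((∑ i, z i ^ 2)⁻¹ • z)) * inversionDiff z)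

/-!
For `z ≠ 0`, `ḡ(z) = I + P(z) h(ι z) P(z)` with `P(z) = I - 2 z zᵀ / ‖z‖²` the Householder
reflection, because `B(z) = ‖z‖⁻² P(z)` and `P(z)² = I`. So it suffices to extend the correction
`P (h ∘ ι) P` by `0` across the origin.

`P` is homogeneous of degree `0` and `ι` of degree `-1`. Rescaling a point to the unit sphere, where
everything is bounded by compactness, turns homogeneity into derivative bounds:
`Dᵏ P(z) = O(‖z‖⁻ᵏ)`, and, by Faà di Bruno and the decay `Dʲ h(y) = O(‖y‖^(-τ-j))`,
`Dᵏ (h ∘ ι)(z) = O(‖z‖^(τ-k))`. By Leibniz the correction satisfies the same bounds for `k ≤ τ - 1`.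
Finally, a function that is `C^m` off `0` with `Dᵏ f(z) = O(‖z‖^(m+1-k))` for `k ≤ m` extends by
`0` to a `C^m` function: for `m ≥ 1`, `f = O(‖z‖²)` gives `Df(0) = 0`, and `Df` satisfies the same
hypotheses with `m - 1`.
-/

open Filter Set Metric Topology
open scoped Nat

section DerivsBoundedByPow

variable {E F : Type*} [NormedAddCommGroup E] [NormedSpace ℝ E]
  [NormedAddCommGroup F] [NormedSpace ℝ F]

def DerivsBoundedByPowOn (m : ℕ) (p : ℤ) (f : E → F) (s : Set E) : Prop :=
  ∃ K, 0 ≤ K ∧ ∀ k ≤ m, ∀ z ∈ s, ‖iteratedFDerivWithin ℝ k f s z‖ ≤ K * ‖z‖ ^ (p - k)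

theorem norm_iteratedFDeriv_comp_smul_le (f : E → F) {c : ℝ} (hc : c ≠ 0) (x : E) (k : ℕ) :
    ‖iteratedFDeriv ℝ k (fun y => f (c • y)) x‖ ≤ |c| ^ k * ‖iteratedFDeriv ℝ k f (c • x)‖ := by
  let e : E ≃L[ℝ] E := ContinuousLinearEquiv.smulLeft (Units.mk0 c hc)
  have he : ‖(e : E →L[ℝ] E)‖ ≤ |c| :=
    ContinuousLinearMap.opNorm_le_bound _ (abs_nonneg c) fun y => by
      simp [e, Units.smul_def, norm_smul]
  have hcomp := e.iteratedFDerivWithin_comp_right f uniqueDiffOn_univ (x := x) (mem_univ _) k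
  simp only [preimage_univ, iteratedFDerivWithin_univ] at hcomp
  calc ‖iteratedFDeriv ℝ k (fun y => f (c • y)) x‖
      = ‖(iteratedFDeriv ℝ k f (c • x)).compContinuousLinearMap fun _ => (e : E →L[ℝ] E)‖ :=
        congrArg norm hcomp
    _ ≤ ‖iteratedFDeriv ℝ k f (c • x)‖ * ∏ _i : Fin k, ‖(e : E →L[ℝ] E)‖ :=
        ContinuousMultilinearMap.norm_compContinuousLinearMap_le _ _
    _ ≤ |c| ^ k * ‖iteratedFDeriv ℝ k f (c • x)‖ := by
        rw [Finset.prod_const, Finset.card_fin, mul_comm]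
        gcongr

theorem DerivsBoundedByPowOn.congr {m : ℕ} {p : ℤ} {f g : E → F} {s : Set E}
    (hf : DerivsBoundedByPowOn m p f s) (hfg : EqOn g f s) : DerivsBoundedByPowOn m p g s := by
  obtain ⟨K, hK0, hK⟩ := hf
  exact ⟨K, hK0, fun k hk z hz => by rw [iteratedFDerivWithin_congr hfg hz]; exact hK k hk z hz⟩

theorem DerivsBoundedByPowOn.mono_of_isOpen {m : ℕ} {p : ℤ} {f : E → F} {s t : Set E}
    (hf : DerivsBoundedByPowOn m p f s) (hs : IsOpen s) (ht : IsOpen t) (hts : t ⊆ s) :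
    DerivsBoundedByPowOn m p f t := by
  obtain ⟨K, hK0, hK⟩ := hf
  refine ⟨K, hK0, fun k hk z hz => ?_⟩
  rw [iteratedFDerivWithin_of_isOpen k ht hz, ← iteratedFDerivWithin_of_isOpen k hs (hts hz)]
  exact hK k hk z (hts hz)

theorem exists_norm_iteratedFDeriv_le_on_sphere [FiniteDimensional ℝ E] {f : E → F} {m : ℕ}
    (hf : ContDiffOn ℝ m f {z | z ≠ 0}) :
    ∃ D, ∀ k ≤ m, ∀ w : E, ‖w‖ = 1 → ‖iteratedFDeriv ℝ k f w‖ ≤ D := by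
  have hopen : IsOpen {z : E | z ≠ 0} := isOpen_ne
  have hcont : ∀ k ≤ m, ContinuousOn (iteratedFDeriv ℝ k f) {z | z ≠ 0} := fun k hk =>
    (hf.continuousOn_iteratedFDerivWithin (by exact_mod_cast hk) hopen.uniqueDiffOn).congr
      fun z hz => (iteratedFDerivWithin_of_isOpen k hopen hz).symm
  have hsphere : sphere (0 : E) 1 ⊆ {z | z ≠ 0} := fun w hw =>
    ne_zero_of_mem_sphere one_ne_zero ⟨w, hw⟩
  obtain ⟨D, hD⟩ := (isCompact_sphere (0 : E) 1).exists_bound_of_continuousOn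
    (f := fun w => ∑ k ∈ Finset.range (m + 1), ‖iteratedFDeriv ℝ k f w‖)
    (continuousOn_finsetSum _ fun k hk =>
      ((hcont k (Nat.lt_succ_iff.mp (Finset.mem_range.mp hk))).mono hsphere).norm)
  refine ⟨D, fun k hk w hw => ?_⟩
  refine le_trans ?_ ((le_abs_self _).trans (hD w (mem_sphere_zero_iff_norm.mpr hw)))
  exact Finset.single_le_sum (f := fun k => ‖iteratedFDeriv ℝ k f w‖)
    (fun _ _ => norm_nonneg _) (Finset.mem_range.mpr (Nat.lt_succ_of_le hk))

theorem derivsBoundedByPowOn_of_homogeneous [FiniteDimensional ℝ E] {f : E → F} {m : ℕ} (d : ℤ)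
    (hf : ContDiffOn ℝ m f {z | z ≠ 0}) (hhom : ∀ c : ℝ, 0 < c → ∀ z, f (c • z) = c ^ d • f z) :
    DerivsBoundedByPowOn m d f {z | z ≠ 0} := by
  obtain ⟨D, hD⟩ := exists_norm_iteratedFDeriv_le_on_sphere hf
  refine ⟨max D 0, le_max_right _ _, fun k hk z (hz : z ≠ 0) => ?_⟩
  set r := ‖z‖
  have hr : 0 < r := norm_pos_iff.mpr hz
  have hw : ‖r⁻¹ • z‖ = 1 := by rw [norm_smul, norm_inv, norm_norm, inv_mul_cancel₀ hr.ne']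
  have hfw : ContDiffAt ℝ k f (r⁻¹ • z) :=
    (hf.contDiffAt (isOpen_ne.mem_nhds (smul_ne_zero (inv_ne_zero hr.ne') hz))).of_le
      (by exact_mod_cast hk)
  rw [iteratedFDerivWithin_of_isOpen k isOpen_ne hz]
  calc ‖iteratedFDeriv ℝ k f z‖
      ≤ |r⁻¹| ^ k * ‖iteratedFDeriv ℝ k (fun x => f (r • x)) (r⁻¹ • z)‖ := by
        simpa only [smul_smul, mul_inv_cancel₀ hr.ne', one_smul] using
          norm_iteratedFDeriv_comp_smul_le (fun x => f (r • x)) (inv_ne_zero hr.ne') z k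
    _ = r⁻¹ ^ k * (r ^ d * ‖iteratedFDeriv ℝ k f (r⁻¹ • z)‖) := by
        simp only [hhom r hr, abs_inv, abs_of_pos hr]
        rw [iteratedFDeriv_const_smul_apply' hfw, norm_smul, Real.norm_of_nonneg (by positivity)]
    _ ≤ r⁻¹ ^ k * (r ^ d * max D 0) := by
        gcongr
        exact (hD k hk _ hw).trans (le_max_left _ _)
    _ = max D 0 * r ^ (d - k) := by
        rw [zpow_sub₀ hr.ne', zpow_natCast, div_eq_mul_inv, inv_pow]; ring

theorem DerivsBoundedByPowOn.bilinear {G H : Type*} [NormedAddCommGroup G] [NormedSpace ℝ G]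
    [NormedAddCommGroup H] [NormedSpace ℝ H] (B : F →L[ℝ] G →L[ℝ] H) {m : ℕ} {p q : ℤ}
    {f : E → F} {g : E → G} {s : Set E} (hs : UniqueDiffOn ℝ s) (hs0 : (0 : E) ∉ s)
    (hf : ContDiffOn ℝ m f s) (hg : ContDiffOn ℝ m g s)
    (hfb : DerivsBoundedByPowOn m p f s) (hgb : DerivsBoundedByPowOn m q g s) :
    DerivsBoundedByPowOn m (p + q) (fun z => B (f z) (g z)) s := by
  obtain ⟨Kf, hKf0, hKf⟩ := hfb
  obtain ⟨Kg, hKg0, hKg⟩ := hgb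
  refine ⟨‖B‖ * 2 ^ m * (Kf * Kg), by positivity, fun k hk z hz => ?_⟩
  have hr : ‖z‖ ≠ 0 := norm_ne_zero_iff.mpr (ne_of_mem_of_not_mem hz hs0)
  have hterm : ∀ i ∈ Finset.range (k + 1), (k.choose i : ℝ) * ‖iteratedFDerivWithin ℝ i f s z‖ *
      ‖iteratedFDerivWithin ℝ (k - i) g s z‖ ≤ k.choose i * (Kf * Kg * ‖z‖ ^ (p + q - k)) := by
    intro i hi
    have hik : i ≤ k := Nat.lt_succ_iff.mp (Finset.mem_range.mp hi)
    rw [mul_assoc]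
    refine mul_le_mul_of_nonneg_left ?_ (Nat.cast_nonneg _)
    calc ‖iteratedFDerivWithin ℝ i f s z‖ * ‖iteratedFDerivWithin ℝ (k - i) g s z‖
        ≤ (Kf * ‖z‖ ^ (p - i)) * (Kg * ‖z‖ ^ (q - ↑(k - i))) :=
          mul_le_mul (hKf i (hik.trans hk) z hz) (hKg _ (by omega) z hz) (norm_nonneg _)
            (by positivity)
      _ = Kf * Kg * ‖z‖ ^ (p + q - k) := by
          rw [show p + q - k = (p - i) + (q - ↑(k - i)) by push_cast [hik]; ring,
            zpow_add₀ hr]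
          ring
  have hsum : ∑ i ∈ Finset.range (k + 1), (k.choose i : ℝ) = 2 ^ k := by
    exact_mod_cast Nat.sum_range_choose k
  calc ‖iteratedFDerivWithin ℝ k (fun z => B (f z) (g z)) s z‖
      ≤ ‖B‖ * ∑ i ∈ Finset.range (k + 1), (k.choose i : ℝ) *
          ‖iteratedFDerivWithin ℝ i f s z‖ * ‖iteratedFDerivWithin ℝ (k - i) g s z‖ :=
        B.norm_iteratedFDerivWithin_le_of_bilinear hf hg hs hz (by exact_mod_cast hk)
    _ ≤ ‖B‖ * (2 ^ k * (Kf * Kg * ‖z‖ ^ (p + q - k))) := by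
        rw [← hsum, Finset.sum_mul]
        exact mul_le_mul_of_nonneg_left (Finset.sum_le_sum hterm) (norm_nonneg B)
    _ ≤ ‖B‖ * (2 ^ m * (Kf * Kg * ‖z‖ ^ (p + q - k))) := by
        gcongr
        · norm_num
    _ = ‖B‖ * 2 ^ m * (Kf * Kg) * ‖z‖ ^ (p + q - k) := by ring

theorem DerivsBoundedByPowOn.fderiv_of_isOpen {m : ℕ} {p : ℤ} {f : E → F} {s : Set E}
    (hs : IsOpen s) (hf : DerivsBoundedByPowOn (m + 1) (p + 1) f s) :
    DerivsBoundedByPowOn m p (fderiv ℝ f) s := by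
  obtain ⟨K, hK0, hK⟩ := hf
  refine ⟨K, hK0, fun k hk z hz => ?_⟩
  have hfderiv : EqOn (fderiv ℝ f) (fderivWithin ℝ f s) s := fun y hy =>
    (fderivWithin_of_isOpen hs hy).symm
  rw [iteratedFDerivWithin_congr hfderiv hz,
    norm_iteratedFDerivWithin_fderivWithin hs.uniqueDiffOn hz]
  convert hK (k + 1) (by omega) z hz using 3
  push_cast; ring

theorem DerivsBoundedByPowOn.isBigO_norm_pow {m p : ℕ} {f : E → F} {U : Set E} (hU : U ∈ 𝓝 0)
    (hf0 : f 0 = 0) (hf : DerivsBoundedByPowOn m p f (U \ {0})) :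
    f =O[𝓝 0] fun z => ‖z‖ ^ p := by
  obtain ⟨K, hK0, hK⟩ := hf
  refine Asymptotics.IsBigO.of_bound K ?_
  filter_upwards [hU] with z hz
  rcases eq_or_ne z 0 with rfl | hz0
  · rw [hf0, norm_zero]; positivity
  · simpa [norm_iteratedFDerivWithin_zero] using hK 0 (Nat.zero_le m) z ⟨hz, hz0⟩

theorem norm_iteratedFDeriv_comp_le_of_isOpen {G : Type*} [NormedAddCommGroup G]
    [NormedSpace ℝ G] {g : F → G} {f : E → F} {s : Set E} {t : Set F} {x : E} {n : ℕ}
    {N : WithTop ℕ∞} (hs : IsOpen s) (ht : IsOpen t) (hg : ContDiffOn ℝ N g t)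
    (hf : ContDiffOn ℝ N f s) (hn : n ≤ N) (hst : MapsTo f s t) (hx : x ∈ s) {C D : ℝ}
    (hC : ∀ i ≤ n, ‖iteratedFDeriv ℝ i g (f x)‖ ≤ C)
    (hD : ∀ i, 1 ≤ i → i ≤ n → ‖iteratedFDeriv ℝ i f x‖ ≤ D ^ i) :
    ‖iteratedFDeriv ℝ n (g ∘ f) x‖ ≤ n ! * C * D ^ n := by
  rw [← iteratedFDerivWithin_of_isOpen n hs hx]
  refine norm_iteratedFDerivWithin_comp_le hg hf hn ht.uniqueDiffOn hs.uniqueDiffOn hst hx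
    (fun i hi => ?_) (fun i hi hin => ?_)
  · rw [iteratedFDerivWithin_of_isOpen i ht (hst hx)]; exact hC i hi
  · rw [iteratedFDerivWithin_of_isOpen i hs hx]; exact hD i hi hin

theorem exists_inv_norm_le_of_homogeneous {E' : Type*} [NormedAddCommGroup E'] [NormedSpace ℝ E']
    [FiniteDimensional ℝ E] {ι : E → E'} (hι : ContinuousOn ι {z | z ≠ 0})
    (hhom : ∀ c : ℝ, 0 < c → ∀ z, ι (c • z) = c⁻¹ • ι z) (hne : ∀ z, z ≠ 0 → ι z ≠ 0) :
    ∃ A, ∀ z, z ≠ 0 → ‖ι z‖⁻¹ ≤ A * ‖z‖ := by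
  have hsphere : sphere (0 : E) 1 ⊆ {z | z ≠ 0} := fun w hw =>
    ne_zero_of_mem_sphere one_ne_zero ⟨w, hw⟩
  obtain ⟨A, hA⟩ := (isCompact_sphere (0 : E) 1).exists_bound_of_continuousOn
    ((hι.mono hsphere).norm.inv₀ fun w hw => norm_ne_zero_iff.mpr (hne w (hsphere hw)))
  refine ⟨A, fun z hz => ?_⟩
  set r := ‖z‖
  have hr : 0 < r := norm_pos_iff.mpr hz
  have hw : ‖r⁻¹ • z‖ = 1 := by rw [norm_smul, norm_inv, norm_norm, inv_mul_cancel₀ hr.ne']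
  have hιz : ι z = r⁻¹ • ι (r⁻¹ • z) := by
    rw [← hhom r hr, smul_smul, mul_inv_cancel₀ hr.ne', one_smul]
  calc ‖ι z‖⁻¹ = ‖ι (r⁻¹ • z)‖⁻¹ * r := by
        rw [hιz, norm_smul, norm_inv, norm_norm, mul_inv, inv_inv, mul_comm]
    _ ≤ A * r := by
        gcongr
        exact (le_abs_self _).trans (hA _ (mem_sphere_zero_iff_norm.mpr hw))

theorem norm_iteratedFDeriv_comp_homogeneous_le {E' : Type*} [NormedAddCommGroup E']
    [NormedSpace ℝ E'] {ι : E → E'} {h : E' → F} {S : Set E'} {z : E} {k : ℕ} {C D : ℝ}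
    (hι : ContDiffOn ℝ k ι {z | z ≠ 0}) (hhom : ∀ c : ℝ, 0 < c → ∀ z, ι (c • z) = c⁻¹ • ι z)
    (hS : IsOpen S) (hh : ContDiffOn ℝ k h S) (hz : z ≠ 0) (hzS : ι z ∈ S)
    (hC : ∀ j ≤ k, ‖z‖⁻¹ ^ j * ‖iteratedFDeriv ℝ j h (ι z)‖ ≤ C)
    (hD : ∀ i, 1 ≤ i → i ≤ k → ‖iteratedFDeriv ℝ i ι (‖z‖⁻¹ • z)‖ ≤ D ^ i) :
    ‖iteratedFDeriv ℝ k (h ∘ ι) z‖ ≤ ‖z‖⁻¹ ^ k * (k ! * C * D ^ k) := by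
  set r := ‖z‖
  have hr : 0 < r := norm_pos_iff.mpr hz
  have hιw : r⁻¹ • ι (r⁻¹ • z) = ι z := by
    rw [← hhom r hr, smul_smul, mul_inv_cancel₀ hr.ne', one_smul]
  -- At scale `r` the point `z` moves to the unit sphere, where Faà di Bruno applies with
  -- bounds on the derivatives of `ι` that do not depend on `z`.
  set g : E' → F := fun y => h (r⁻¹ • y)
  have hrescale : h ∘ ι = fun x => (g ∘ ι) (r⁻¹ • x) := by
    ext x; simp only [g, Function.comp_apply, hhom r⁻¹ (inv_pos.mpr hr), inv_inv, smul_smul,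
      inv_mul_cancel₀ hr.ne', one_smul]
  set t := (fun y : E' => r⁻¹ • y) ⁻¹' S
  have ht : IsOpen t := hS.preimage (continuous_const_smul _)
  have hg : ContDiffOn ℝ k g t := hh.comp (contDiff_const_smul _).contDiffOn (mapsTo_preimage _ _)
  have hgC : ∀ j ≤ k, ‖iteratedFDeriv ℝ j g (ι (r⁻¹ • z))‖ ≤ C := fun j hj => by
    refine (norm_iteratedFDeriv_comp_smul_le h (inv_ne_zero hr.ne') _ j).trans ?_
    rw [abs_of_pos (inv_pos.mpr hr), hιw]
    exact hC j hj
  have hcomp := norm_iteratedFDeriv_comp_le_of_isOpen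
    (hι.continuousOn.isOpen_inter_preimage isOpen_ne ht) ht hg (hι.mono inter_subset_left) le_rfl
    (fun x hx => hx.2) ⟨smul_ne_zero (inv_ne_zero hr.ne') hz, show r⁻¹ • ι (r⁻¹ • z) ∈ S by
      rw [hιw]; exact hzS⟩ hgC hD
  rw [hrescale]
  refine (norm_iteratedFDeriv_comp_smul_le _ (inv_ne_zero hr.ne') z k).trans ?_
  rw [abs_of_pos (inv_pos.mpr hr)]
  gcongr

theorem DerivsBoundedByPowOn.comp_homogeneous {E' : Type*} [NormedAddCommGroup E']
    [NormedSpace ℝ E'] [FiniteDimensional ℝ E] {ι : E → E'} {h : E' → F} {S : Set E'} {s : Set E}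
    {m p : ℕ} (hι : ContDiffOn ℝ m ι {z | z ≠ 0})
    (hhom : ∀ c : ℝ, 0 < c → ∀ z, ι (c • z) = c⁻¹ • ι z) (hne : ∀ z, z ≠ 0 → ι z ≠ 0)
    (hS : IsOpen S) (hh : ContDiffOn ℝ m h S) (hhb : DerivsBoundedByPowOn m (-p) h S)
    (hs : IsOpen s) (hs0 : (0 : E) ∉ s) (hmaps : MapsTo ι s S) :
    DerivsBoundedByPowOn m p (h ∘ ι) s := by
  obtain ⟨Kh, hKh0, hKh⟩ := hhb
  obtain ⟨Dι, hDι⟩ := exists_norm_iteratedFDeriv_le_on_sphere hι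
  obtain ⟨A, hA⟩ := exists_inv_norm_le_of_homogeneous hι.continuousOn hhom hne
  set D := max 1 Dι
  set A₁ := max 1 A
  refine ⟨m ! * (Kh * A₁ ^ (p + m)) * D ^ m, by positivity, fun k hk z hz => ?_⟩
  have hz0 : z ≠ 0 := ne_of_mem_of_not_mem hz hs0
  set r := ‖z‖
  have hr : 0 < r := norm_pos_iff.mpr hz0
  have hC : ∀ j ≤ k, r⁻¹ ^ j * ‖iteratedFDeriv ℝ j h (ι z)‖ ≤ Kh * A₁ ^ (p + m) * r ^ p := by
    intro j hj
    have hιz : ‖ι z‖⁻¹ ≤ A₁ * r := (hA z hz0).trans (by gcongr; exact le_max_right _ _)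
    calc r⁻¹ ^ j * ‖iteratedFDeriv ℝ j h (ι z)‖ ≤ r⁻¹ ^ j * (Kh * ‖ι z‖⁻¹ ^ (p + j)) := by
          rw [← iteratedFDerivWithin_of_isOpen j hS (hmaps hz)]
          refine mul_le_mul_of_nonneg_left ((hKh j (hj.trans hk) _ (hmaps hz)).trans_eq ?_)
            (by positivity)
          rw [← zpow_natCast, _root_.inv_zpow', Nat.cast_add, neg_add']
      _ ≤ r⁻¹ ^ j * (Kh * (A₁ * r) ^ (p + j)) := by gcongr
      _ = Kh * A₁ ^ (p + j) * r ^ p := by rw [mul_pow, pow_add r, inv_pow]; field_simp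
      _ ≤ Kh * A₁ ^ (p + m) * r ^ p := by
          gcongr
          · exact le_max_left _ _
          · omega
  have hw : ‖r⁻¹ • z‖ = 1 := by rw [norm_smul, norm_inv, norm_norm, inv_mul_cancel₀ hr.ne']
  have hD : ∀ i, 1 ≤ i → i ≤ k → ‖iteratedFDeriv ℝ i ι (r⁻¹ • z)‖ ≤ D ^ i := fun i hi hik =>
    (hDι i (hik.trans hk) _ hw).trans
      ((le_max_right _ _).trans (le_self_pow₀ (le_max_left _ _) (by omega)))
  have hkm : (k ! : ℝ) * D ^ k ≤ m ! * D ^ m := by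
    gcongr
    exact le_max_left _ _
  rw [iteratedFDerivWithin_of_isOpen k hs hz]
  calc ‖iteratedFDeriv ℝ k (h ∘ ι) z‖
      ≤ r⁻¹ ^ k * (k ! * (Kh * A₁ ^ (p + m) * r ^ p) * D ^ k) :=
        norm_iteratedFDeriv_comp_homogeneous_le (hι.of_le (by exact_mod_cast hk)) hhom hS
          (hh.of_le (by exact_mod_cast hk)) hz0 (hmaps hz) hC hD
    _ = (k ! * D ^ k) * (Kh * A₁ ^ (p + m)) * (r ^ p * r⁻¹ ^ k) := by ring
    _ ≤ (m ! * D ^ m) * (Kh * A₁ ^ (p + m)) * (r ^ p * r⁻¹ ^ k) := by gcongr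
    _ = m ! * (Kh * A₁ ^ (p + m)) * D ^ m * r ^ ((p : ℤ) - k) := by
        rw [zpow_sub₀ hr.ne', zpow_natCast, zpow_natCast, div_eq_mul_inv, ← inv_pow]; ring

end DerivsBoundedByPow

section Extension

universe u

-- `E` and `F` share a universe so that the induction can pass from `f` to `fderiv ℝ f`.
variable {E F : Type u} [NormedAddCommGroup E] [NormedSpace ℝ E]
  [NormedAddCommGroup F] [NormedSpace ℝ F]

theorem contDiffOn_of_derivsBoundedByPowOn {U : Set E} (hU : IsOpen U) (m : ℕ) {f : E → F}
    (hf : ContDiffOn ℝ m f (U \ {0})) (hb : DerivsBoundedByPowOn m (m + 1) f (U \ {0}))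
    (hf0 : f 0 = 0) : ContDiffOn ℝ m f U := by
  by_cases h0 : (0 : E) ∈ U
  case neg => rwa [sdiff_singleton_eq_self h0] at hf
  have hU0 : IsOpen (U \ {0}) := hU.sdiff isClosed_singleton
  induction m generalizing F with
  | zero =>
    rw [Nat.cast_zero, contDiffOn_zero]
    intro z hz
    rcases eq_or_ne z 0 with rfl | hz0
    · refine ContinuousAt.continuousWithinAt ?_
      rw [ContinuousAt, hf0]
      refine (hb.isBigO_norm_pow (p := 1) (hU.mem_nhds hz) hf0).trans_tendsto ?_
      simpa using (continuous_norm.pow 1).tendsto (0 : E)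
    · exact (hf.continuousOn.continuousAt (hU0.mem_nhds ⟨hz, hz0⟩)).continuousWithinAt
  | succ m ih =>
    rw [Nat.cast_succ] at hb
    have hdiff0 : HasFDerivAt f (0 : E →L[ℝ] F) 0 := by
      refine Asymptotics.IsBigO.hasFDerivAt (n := m + 2) ?_ (by omega)
      simpa using hb.isBigO_norm_pow (p := m + 2) (hU.mem_nhds h0) hf0
    have hderiv : ContDiffOn ℝ m (fderiv ℝ f) U :=
      ih (hf.fderiv_of_isOpen hU0 (by norm_cast)) (hb.fderiv_of_isOpen hU0) hdiff0.fderiv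
    rw [Nat.cast_succ, contDiffOn_succ_iff_fderiv_of_isOpen hU]
    refine ⟨fun z hz => ?_, by simp, hderiv⟩
    rcases eq_or_ne z 0 with rfl | hz0
    · exact hdiff0.differentiableAt.differentiableWithinAt
    · exact ((hf.contDiffAt (hU0.mem_nhds ⟨hz, hz0⟩)).differentiableAt
        (by simp)).differentiableWithinAt

theorem contDiffOn_update_zero_of_derivsBoundedByPowOn [DecidableEq E] {U : Set E}
    (hU : IsOpen U) {m : ℕ} {f : E → F} (hf : ContDiffOn ℝ m f (U \ {0}))
    (hb : DerivsBoundedByPowOn m (m + 1) f (U \ {0})) :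
    ContDiffOn ℝ m (Function.update f 0 0) U := by
  have hupdate : EqOn (Function.update f 0 0) f (U \ {0}) := fun z hz =>
    Function.update_of_ne hz.2 _ _
  exact contDiffOn_of_derivsBoundedByPowOn hU m (hf.congr hupdate) (hb.congr hupdate)
    (Function.update_self _ _ _)

end Extension

section Coordinates

variable {n : ℕ}

theorem euclNorm_eq_norm_toLp (z : Fin n → ℝ) :
    euclNorm z = ‖(WithLp.toLp 2 z : EuclideanSpace ℝ (Fin n))‖ := by
  simp [euclNorm, EuclideanSpace.norm_eq]

theorem continuous_euclNorm : Continuous (euclNorm (n := n)) := by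
  simp_rw [funext euclNorm_eq_norm_toLp]
  exact continuous_norm.comp (PiLp.continuous_toLp 2 _)

theorem euclNorm_zero : euclNorm (0 : Fin n → ℝ) = 0 := by
  simp [euclNorm]

theorem euclNorm_pos {z : Fin n → ℝ} (hz : z ≠ 0) : 0 < euclNorm z := by
  rw [euclNorm_eq_norm_toLp, norm_pos_iff, Ne, WithLp.toLp_eq_zero]
  exact hz

theorem euclNorm_smul (c : ℝ) (z : Fin n → ℝ) : euclNorm (c • z) = |c| * euclNorm z := by
  rw [euclNorm_eq_norm_toLp, euclNorm_eq_norm_toLp, WithLp.toLp_smul, norm_smul, Real.norm_eq_abs]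

theorem sum_sq_eq_euclNorm_sq (z : Fin n → ℝ) : ∑ i, z i ^ 2 = euclNorm z ^ 2 :=
  (Real.sq_sqrt (Finset.sum_nonneg fun i _ => sq_nonneg (z i))).symm

theorem sum_sq_ne_zero {z : Fin n → ℝ} (hz : z ≠ 0) : ∑ i, z i ^ 2 ≠ 0 := by
  rw [sum_sq_eq_euclNorm_sq]
  exact (pow_pos (euclNorm_pos hz) 2).ne'

theorem norm_le_euclNorm (z : Fin n → ℝ) : ‖z‖ ≤ euclNorm z := by
  refine (pi_norm_le_iff_of_nonneg (Real.sqrt_nonneg _)).mpr fun i => ?_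
  rw [← euclNorm, euclNorm_eq_norm_toLp]
  exact PiLp.norm_apply_le (WithLp.toLp 2 z) i

theorem sum_sq_smul (c : ℝ) (z : Fin n → ℝ) : ∑ i, (c • z) i ^ 2 = c ^ 2 * ∑ i, z i ^ 2 := by
  simp only [Pi.smul_apply, smul_eq_mul, mul_pow, Finset.mul_sum]

theorem contDiff_sum_sq {m : WithTop ℕ∞} : ContDiff ℝ m fun z : Fin n → ℝ => ∑ i, z i ^ 2 :=
  ContDiff.sum fun i _ => (contDiff_apply ℝ ℝ i).pow 2

noncomputable def euclInversion (z : Fin n → ℝ) : Fin n → ℝ := (∑ i, z i ^ 2)⁻¹ • z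

theorem contDiffOn_euclInversion {m : WithTop ℕ∞} :
    ContDiffOn ℝ m (euclInversion (n := n)) {z | z ≠ 0} :=
  (contDiff_sum_sq.contDiffOn.inv fun _ => sum_sq_ne_zero).smul contDiffOn_id

theorem euclInversion_smul (c : ℝ) (hc : 0 < c) (z : Fin n → ℝ) :
    euclInversion (c • z) = c⁻¹ • euclInversion z := by
  simp only [euclInversion, sum_sq_smul, smul_smul, mul_inv]
  congr 1
  field_simp

theorem euclNorm_euclInversion {z : Fin n → ℝ} (hz : z ≠ 0) :
    euclNorm (euclInversion z) = (euclNorm z)⁻¹ := by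
  have hz' := (euclNorm_pos hz).ne'
  rw [euclInversion, euclNorm_smul, sum_sq_eq_euclNorm_sq, abs_of_pos (by positivity)]
  field_simp

theorem mapsTo_euclInversion {R : ℝ} (hR : 0 < R) :
    MapsTo euclInversion ({z : Fin n → ℝ | euclNorm z < R⁻¹} \ {0}) {y | R < euclNorm y} :=
  fun z hz => by
    show R < euclNorm (euclInversion z)
    rw [euclNorm_euclInversion hz.2]
    exact (lt_inv_comm₀ hR (euclNorm_pos hz.2)).mpr hz.1

theorem euclInversion_ne_zero {z : Fin n → ℝ} (hz : z ≠ 0) : euclInversion z ≠ 0 :=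
  smul_ne_zero (inv_ne_zero (sum_sq_ne_zero hz)) hz

noncomputable def householder (z : Fin n → ℝ) : Matrix (Fin n) (Fin n) ℝ :=
  1 - (2 * (∑ i, z i ^ 2)⁻¹) • vecMulVec z z

theorem contDiffOn_householder {m : WithTop ℕ∞} :
    ContDiffOn ℝ m (householder (n := n)) {z | z ≠ 0} := by
  have hvv : ContDiff ℝ m fun z : Fin n → ℝ => vecMulVec z z :=
    contDiff_pi.2 fun i => contDiff_pi.2 fun j => (contDiff_apply ℝ ℝ i).mul (contDiff_apply ℝ ℝ j)
  exact contDiffOn_const.sub ((contDiffOn_const.mul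
    (contDiff_sum_sq.contDiffOn.inv fun _ => sum_sq_ne_zero)).smul hvv.contDiffOn)

theorem householder_smul (c : ℝ) (hc : 0 < c) (z : Fin n → ℝ) :
    householder (c • z) = c ^ (0 : ℤ) • householder z := by
  rw [_root_.zpow_zero, one_smul, householder, householder, sum_sq_smul, smul_vecMulVec,
    vecMulVec_smul, smul_smul, smul_smul, mul_inv]
  congr 2
  field_simp

theorem transpose_householder (z : Fin n → ℝ) : (householder z)ᵀ = householder z := by
  simp [householder, transpose_vecMulVec]

theorem householder_mul_self {z : Fin n → ℝ} (hz : z ≠ 0) : householder z * householder z = 1 := by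
  have hvv : vecMulVec z z * vecMulVec z z = (∑ i, z i ^ 2) • vecMulVec z z := by
    rw [vecMulVec_mul_vecMulVec, vecMulVec_smul]
    simp [dotProduct, sq]
  have hscalar : 2 * (∑ i, z i ^ 2)⁻¹ * (2 * (∑ i, z i ^ 2)⁻¹) * ∑ i, z i ^ 2
      = 2 * (∑ i, z i ^ 2)⁻¹ + 2 * (∑ i, z i ^ 2)⁻¹ := by
    field_simp [sum_sq_ne_zero hz]; ring
  rw [householder, sub_mul, mul_sub, mul_sub, one_mul, mul_one, one_mul, smul_mul_smul_comm, hvv,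
    smul_smul, hscalar, add_smul]
  abel

theorem invertedMetric_eq (h : (Fin n → ℝ) → Matrix (Fin n) (Fin n) ℝ) {z : Fin n → ℝ}
    (hz : z ≠ 0) :
    invertedMetric h z = 1 + householder z * (h (euclInversion z) * householder z) := by
  have hB : inversionDiff z = (∑ i, z i ^ 2)⁻¹ • householder z := rfl
  have hq := sum_sq_ne_zero hz
  rw [invertedMetric, hB, transpose_smul, transpose_householder, Matrix.smul_mul, Matrix.smul_mul,
    Matrix.mul_smul, smul_smul, smul_smul, show (∑ i, z i ^ 2) ^ 2 * (∑ i, z i ^ 2)⁻¹ *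
      (∑ i, z i ^ 2)⁻¹ = 1 by field_simp, one_smul, mul_add, add_mul, mul_one,
    householder_mul_self hz, mul_assoc]
  rfl

/-- Matrix multiplication as a continuous bilinear map. The entrywise sup norm carried by matrices
here is not submultiplicative, so `ContinuousLinearMap.mul` does not apply. -/
noncomputable def matrixMulCLM (n : ℕ) :
    Matrix (Fin n) (Fin n) ℝ →L[ℝ] Matrix (Fin n) (Fin n) ℝ →L[ℝ] Matrix (Fin n) (Fin n) ℝ :=
  LinearMap.toContinuousLinearMap
    (LinearMap.toContinuousLinearMap.toLinearMap ∘ₗ LinearMap.mul ℝ (Matrix (Fin n) (Fin n) ℝ))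

theorem ContDiffOn.householder_conj {m : WithTop ℕ∞} {g : (Fin n → ℝ) → Matrix (Fin n) (Fin n) ℝ}
    {s : Set (Fin n → ℝ)} (hs0 : (0 : Fin n → ℝ) ∉ s) (hg : ContDiffOn ℝ m g s) :
    ContDiffOn ℝ m (fun z => householder z * (g z * householder z)) s := by
  have hP : ContDiffOn ℝ m householder s :=
    contDiffOn_householder.mono fun z hz h0 => hs0 (h0 ▸ hz)
  have hmul := (matrixMulCLM n).isBoundedBilinearMap.contDiff (n := m)
  exact hmul.comp_contDiffOn (hP.prodMk (hmul.comp_contDiffOn (hg.prodMk hP)))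

theorem DerivsBoundedByPowOn.householder_conj {m : ℕ} {p : ℤ}
    {g : (Fin n → ℝ) → Matrix (Fin n) (Fin n) ℝ} {s : Set (Fin n → ℝ)} (hs : IsOpen s)
    (hs0 : (0 : Fin n → ℝ) ∉ s) (hg : ContDiffOn ℝ m g s) (hgb : DerivsBoundedByPowOn m p g s) :
    DerivsBoundedByPowOn m p (fun z => householder z * (g z * householder z)) s := by
  have hsub : s ⊆ {z | z ≠ 0} := fun z hz h0 => hs0 (h0 ▸ hz)
  have hP : ContDiffOn ℝ m householder s := contDiffOn_householder.mono hsub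
  have hmul := (matrixMulCLM n).isBoundedBilinearMap.contDiff (n := m)
  have hPb : DerivsBoundedByPowOn m 0 householder s :=
    (derivsBoundedByPowOn_of_homogeneous 0 contDiffOn_householder householder_smul).mono_of_isOpen
      isOpen_ne hs hsub
  have := hPb.bilinear (matrixMulCLM n) hs.uniqueDiffOn hs0 hP (hmul.comp_contDiffOn (hg.prodMk hP))
    (hgb.bilinear (matrixMulCLM n) hs.uniqueDiffOn hs0 hg hP hPb)
  rwa [zero_add, add_zero] at this

theorem derivsBoundedByPowOn_of_euclNorm_decay {F : Type*} [NormedAddCommGroup F]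
    [NormedSpace ℝ F] {m τ : ℕ} {R C : ℝ} (hR : 0 < R) (hC : 0 ≤ C) {h : (Fin n → ℝ) → F}
    (hdecay : ∀ k ≤ m, ∀ y : Fin n → ℝ, R < euclNorm y →
      ‖iteratedFDerivWithin ℝ k h {y' | R < euclNorm y'} y‖ ≤ C * euclNorm y ^ (-(τ + k : ℝ))) :
    DerivsBoundedByPowOn m (-τ) h {y | R < euclNorm y} := by
  refine ⟨C, hC, fun k hk y hy => (hdecay k hk y hy).trans ?_⟩
  have hy0 : 0 < ‖y‖ := norm_pos_iff.mpr fun h0 => (hR.trans hy).ne' (by rw [h0, euclNorm_zero])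
  gcongr
  rw [← Real.rpow_intCast]
  push_cast
  rw [← neg_add']
  exact Real.rpow_le_rpow_of_nonpos hy0 (norm_le_euclNorm y) (by linarith)

end Coordinates

theorem invertedMetric_extends_CtauMinusOne_general
    (n : ℕ) (R C : ℝ) (hR : 0 < R) (hC : 0 ≤ C)
    (τ μ : ℕ) (hτ : 3 ≤ τ) (hμ : τ - 1 ≤ μ)
    (h : (Fin n → ℝ) → Matrix (Fin n) (Fin n) ℝ)
    (hsmooth : ContDiffOn ℝ μ h {y : Fin n → ℝ | R < euclNorm y})
    (hderiv : ∀ k : ℕ, k ≤ μ → ∀ y : Fin n → ℝ, R < euclNorm y →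
      ‖iteratedFDerivWithin ℝ k h {y' : Fin n → ℝ | R < euclNorm y'} y‖
        ≤ C * euclNorm y ^ (-(τ + k : ℝ))) :
    ∃ G : (Fin n → ℝ) → Matrix (Fin n) (Fin n) ℝ,
      ContDiffOn ℝ (τ - 1 : ℕ) G {z : Fin n → ℝ | euclNorm z < R⁻¹} ∧
      (∀ z : Fin n → ℝ, z ≠ 0 → euclNorm z < R⁻¹ → G z = invertedMetric h z) ∧
      G 0 = 1 := by
  set S := {y : Fin n → ℝ | R < euclNorm y}
  set Ω := {z : Fin n → ℝ | euclNorm z < R⁻¹}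
  have hΩ : IsOpen Ω := isOpen_lt continuous_euclNorm continuous_const
  have hΩ0 : IsOpen (Ω \ {0}) := hΩ.sdiff isClosed_singleton
  have h0 : (0 : Fin n → ℝ) ∉ Ω \ {0} := notMem_sdiff_of_mem rfl
  have hh : ContDiffOn ℝ (τ - 1 : ℕ) h S := hsmooth.of_le (by exact_mod_cast hμ)
  have hg : ContDiffOn ℝ (τ - 1 : ℕ) (h ∘ euclInversion) (Ω \ {0}) :=
    hh.comp (contDiffOn_euclInversion.mono fun z hz => hz.2) (mapsTo_euclInversion hR)
  have hgb : DerivsBoundedByPowOn (τ - 1) τ (h ∘ euclInversion) (Ω \ {0}) :=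
    (derivsBoundedByPowOn_of_euclNorm_decay hR hC fun k hk => hderiv k (hk.trans hμ))
      |>.comp_homogeneous contDiffOn_euclInversion euclInversion_smul
        (fun _ => euclInversion_ne_zero) (isOpen_lt continuous_const continuous_euclNorm) hh
        hΩ0 h0 (mapsTo_euclInversion hR)
  set F := fun z => householder z * ((h ∘ euclInversion) z * householder z)
  have hext : ContDiffOn ℝ (τ - 1 : ℕ) (Function.update F 0 0) Ω := by
    refine contDiffOn_update_zero_of_derivsBoundedByPowOn hΩ (hg.householder_conj h0) ?_
    rw [show ((τ - 1 : ℕ) : ℤ) + 1 = τ by omega]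
    exact hgb.householder_conj hΩ0 h0 hg
  refine ⟨fun z => 1 + Function.update F 0 0 z, contDiffOn_const.add hext, fun z hz _ => ?_,
    by simp⟩
  show 1 + Function.update F 0 0 z = _
  rw [Function.update_of_ne hz, invertedMetric_eq h hz]
  rfl

/-- **Lemma 4** (conformal one-point completion of an ALE end), in coordinates: if the ALE
metric coefficients `g = I + h` are of order `(τ, μ)` with `μ ≥ τ − 1 ≥ 2`, then the
conformally rescaled metric `ḡ = ρ⁻⁴ g` in inverted coordinates extends as a `C^{τ−1}`
matrix-valued map across `z = 0`, with value `I` there. -/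
theorem invertedMetric_extends_CtauMinusOne
    (n : ℕ) (hn : 1 ≤ n) (R C : ℝ) (hR : 0 < R) (hC : 0 ≤ C)
    (τ μ : ℕ) (hτ : 3 ≤ τ) (hμ : τ - 1 ≤ μ)
    (h : (Fin n → ℝ) → Matrix (Fin n) (Fin n) ℝ)
    (hsmooth : ContDiffOn ℝ μ h {y : Fin n → ℝ | R < euclNorm y})
    (hderiv : ∀ k : ℕ, k ≤ μ → ∀ y : Fin n → ℝ, R < euclNorm y →
      ‖iteratedFDerivWithin ℝ k h {y' : Fin n → ℝ | R < euclNorm y'} y‖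
        ≤ C * euclNorm y ^ (-(τ + k : ℝ))) :
    ∃ G : (Fin n → ℝ) → Matrix (Fin n) (Fin n) ℝ,
      ContDiffOn ℝ (τ - 1 : ℕ) G {z : Fin n → ℝ | euclNorm z < R⁻¹} ∧
      (∀ z : Fin n → ℝ, z ≠ 0 → euclNorm z < R⁻¹ → G z = invertedMetric h z) ∧
      G 0 = 1 :=
  invertedMetric_extends_CtauMinusOne_general n R C hR hC τ μ hτ hμ h hsmooth hderiv
end
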